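/- arXiv:1011.5265 — 5 statements merged into one kernel-verified Lean document; each statement's English description precedes it below -/
import Mathlib

section
/- In any grid diagram, the Maslov gradings of two generators differing by a single transposition of adjacent columns differ by an odd integer; in particular, if R is an empty rectangle joining generator x to generator y, then M(x) - M(y) = 1 - 2·(number of O-markings in R). -/
/-- The planar bilinear form `J`. -/
noncomputable def J (p q : ℝ × ℝ) : ℝ :=
  if (p.1 - q.1) * (p.2 - q.2) > 0 then 1/2 else 0

/-- The Maslov grading `M(σ) = J(x-O, x-O) + 1` of the generator with points `(i, σ i)`,
where the `O`-markings are at the points `(i + 1/2, o i + 1/2)`. -/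
noncomputable def maslov (n : ℕ) (o σ : Equiv.Perm (Fin n)) : ℝ :=
  (∑ i : Fin n, ∑ j : Fin n, J (((i : ℕ) : ℝ), ((σ i : ℕ) : ℝ)) (((j : ℕ) : ℝ), ((σ j : ℕ) : ℝ)))
    - 2 * (∑ i : Fin n, ∑ j : Fin n, J (((i : ℕ) : ℝ), ((σ i : ℕ) : ℝ))
        (((j : ℕ) : ℝ) + 1/2, ((o j : ℕ) : ℝ) + 1/2))
    + (∑ i : Fin n, ∑ j : Fin n, J (((i : ℕ) : ℝ) + 1/2, ((o i : ℕ) : ℝ) + 1/2)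
        (((j : ℕ) : ℝ) + 1/2, ((o j : ℕ) : ℝ) + 1/2))
    + 1

lemma J_cast (i j s t : ℕ) :
    J ((i:ℝ), (s:ℝ)) ((j:ℝ), (t:ℝ)) = if (j < i ∧ t < s) ∨ (i < j ∧ s < t) then (1/2:ℝ) else 0 := by
  have h : ((i:ℝ) - j) * ((s:ℝ) - t) > 0 ↔ (j < i ∧ t < s) ∨ (i < j ∧ s < t) := by
    rw [gt_iff_lt, mul_pos_iff]
    simp [sub_pos, sub_neg, Nat.cast_lt]
  simp only [J]
  exact if_congr h rfl rfl

lemma J_cast_half (i j s t : ℕ) :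
    J ((i:ℝ), (s:ℝ)) ((j:ℝ) + 1/2, (t:ℝ) + 1/2)
      = if (j < i ∧ t < s) ∨ (i ≤ j ∧ s ≤ t) then (1/2:ℝ) else 0 := by
  have h1 : ∀ m k : ℕ, (0:ℝ) < (m:ℝ) - ((k:ℝ) + 1/2) ↔ k < m := by
    intro m k
    constructor
    · intro h
      by_contra hc
      push_neg at hc
      have : (m:ℝ) ≤ k := by exact_mod_cast hc
      linarith
    · intro h
      have : (k:ℝ) + 1 ≤ m := by exact_mod_cast h
      linarith
  have h2 : ∀ m k : ℕ, (m:ℝ) - ((k:ℝ) + 1/2) < 0 ↔ m ≤ k := by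
    intro m k
    constructor
    · intro h
      by_contra hc
      push_neg at hc
      have : (k:ℝ) + 1 ≤ m := by exact_mod_cast hc
      linarith
    · intro h
      have : (m:ℝ) ≤ k := by exact_mod_cast h
      linarith
  have h : ((i:ℝ) - ((j:ℝ) + 1/2)) * ((s:ℝ) - ((t:ℝ) + 1/2)) > 0 ↔
      (j < i ∧ t < s) ∨ (i ≤ j ∧ s ≤ t) := by
    rw [gt_iff_lt, mul_pos_iff, h1 i j, h1 s t, h2 i j, h2 s t]
  simp only [J]
  exact if_congr h rfl rfl

set_option maxHeartbeats 2000000 in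
lemma Adiff (n : ℕ) (σ τ : Equiv.Perm (Fin n)) (a b : Fin n) (hab : a < b) (hcd : σ a < σ b)
    (hτa : τ a = σ b) (hτb : τ b = σ a)
    (hagree : ∀ i, i ≠ a → i ≠ b → τ i = σ i)
    (hempty : ∀ i, a < i → i < b → ¬(σ a < σ i ∧ σ i < σ b)) :
    (∑ i : Fin n, ∑ j : Fin n, J (((i : ℕ) : ℝ), ((σ i : ℕ) : ℝ)) (((j : ℕ) : ℝ), ((σ j : ℕ) : ℝ)))
      - (∑ i : Fin n, ∑ j : Fin n,
          J (((i : ℕ) : ℝ), ((τ i : ℕ) : ℝ)) (((j : ℕ) : ℝ), ((τ j : ℕ) : ℝ))) = 1 := by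
  classical
  have hne : a ≠ b := ne_of_lt hab
  have habN : (a:ℕ) < (b:ℕ) := hab
  have hcdN : ((σ a : Fin n) : ℕ) < ((σ b : Fin n) : ℕ) := hcd
  rw [← Finset.sum_sub_distrib]
  simp only [← Finset.sum_sub_distrib]
  -- goal: ∑ i, ∑ j, (gσ i j - gτ i j) = 1
  have hrow0 : ∀ i : Fin n, i ≠ a → i ≠ b →
      (∑ j : Fin n, (J (((i : ℕ) : ℝ), ((σ i : ℕ) : ℝ)) (((j : ℕ) : ℝ), ((σ j : ℕ) : ℝ))
        - J (((i : ℕ) : ℝ), ((τ i : ℕ) : ℝ)) (((j : ℕ) : ℝ), ((τ j : ℕ) : ℝ)))) = 0 := by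
    intro i hia hib
    have hti : τ i = σ i := hagree i hia hib
    have h1 : (i:ℕ) ≠ (a:ℕ) := fun h => hia (Fin.val_injective h)
    have h2 : (i:ℕ) ≠ (b:ℕ) := fun h => hib (Fin.val_injective h)
    have h3 : ((σ i : Fin n):ℕ) ≠ ((σ a : Fin n):ℕ) :=
      fun h => (σ.injective.ne hia) (Fin.val_injective h)
    have h4 : ((σ i : Fin n):ℕ) ≠ ((σ b : Fin n):ℕ) :=
      fun h => (σ.injective.ne hib) (Fin.val_injective h)
    have hemp : ¬((a:ℕ) < (i:ℕ) ∧ (i:ℕ) < (b:ℕ) ∧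
        ((σ a : Fin n):ℕ) < ((σ i : Fin n):ℕ) ∧ ((σ i : Fin n):ℕ) < ((σ b : Fin n):ℕ)) := by
      rintro ⟨x1, x2, x3, x4⟩
      exact hempty i x1 x2 ⟨x3, x4⟩
    calc (∑ j : Fin n, (J (((i : ℕ) : ℝ), ((σ i : ℕ) : ℝ)) (((j : ℕ) : ℝ), ((σ j : ℕ) : ℝ))
            - J (((i : ℕ) : ℝ), ((τ i : ℕ) : ℝ)) (((j : ℕ) : ℝ), ((τ j : ℕ) : ℝ))))
        = ∑ j ∈ ({a, b} : Finset (Fin n)),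
            (J (((i : ℕ) : ℝ), ((σ i : ℕ) : ℝ)) (((j : ℕ) : ℝ), ((σ j : ℕ) : ℝ))
            - J (((i : ℕ) : ℝ), ((τ i : ℕ) : ℝ)) (((j : ℕ) : ℝ), ((τ j : ℕ) : ℝ))) := by
          refine (Finset.sum_subset (Finset.subset_univ _) ?_).symm
          intro j _ hj
          simp only [Finset.mem_insert, Finset.mem_singleton, not_or] at hj
          simp only [hti, hagree j hj.1 hj.2]
          ring
      _ = 0 := by
          rw [Finset.sum_pair hne]
          simp only [hti, hτa, hτb, J_cast]
          split_ifs <;> first | omega | norm_num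
  calc (∑ i : Fin n, ∑ j : Fin n,
          (J (((i : ℕ) : ℝ), ((σ i : ℕ) : ℝ)) (((j : ℕ) : ℝ), ((σ j : ℕ) : ℝ))
          - J (((i : ℕ) : ℝ), ((τ i : ℕ) : ℝ)) (((j : ℕ) : ℝ), ((τ j : ℕ) : ℝ))))
      = ∑ i ∈ ({a, b} : Finset (Fin n)), ∑ j : Fin n,
          (J (((i : ℕ) : ℝ), ((σ i : ℕ) : ℝ)) (((j : ℕ) : ℝ), ((σ j : ℕ) : ℝ))
          - J (((i : ℕ) : ℝ), ((τ i : ℕ) : ℝ)) (((j : ℕ) : ℝ), ((τ j : ℕ) : ℝ))) := by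
        refine (Finset.sum_subset (Finset.subset_univ _) ?_).symm
        intro i _ hi
        simp only [Finset.mem_insert, Finset.mem_singleton, not_or] at hi
        exact hrow0 i hi.1 hi.2
    _ = 1 := by
        rw [Finset.sum_pair hne, ← Finset.sum_add_distrib]
        have hsplit : (∑ j : Fin n,
            ((J (((a : ℕ) : ℝ), ((σ a : ℕ) : ℝ)) (((j : ℕ) : ℝ), ((σ j : ℕ) : ℝ))
              - J (((a : ℕ) : ℝ), ((τ a : ℕ) : ℝ)) (((j : ℕ) : ℝ), ((τ j : ℕ) : ℝ)))
            + (J (((b : ℕ) : ℝ), ((σ b : ℕ) : ℝ)) (((j : ℕ) : ℝ), ((σ j : ℕ) : ℝ))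
              - J (((b : ℕ) : ℝ), ((τ b : ℕ) : ℝ)) (((j : ℕ) : ℝ), ((τ j : ℕ) : ℝ)))))
            = ∑ j ∈ ({a, b} : Finset (Fin n)),
            ((J (((a : ℕ) : ℝ), ((σ a : ℕ) : ℝ)) (((j : ℕ) : ℝ), ((σ j : ℕ) : ℝ))
              - J (((a : ℕ) : ℝ), ((τ a : ℕ) : ℝ)) (((j : ℕ) : ℝ), ((τ j : ℕ) : ℝ)))
            + (J (((b : ℕ) : ℝ), ((σ b : ℕ) : ℝ)) (((j : ℕ) : ℝ), ((σ j : ℕ) : ℝ))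
              - J (((b : ℕ) : ℝ), ((τ b : ℕ) : ℝ)) (((j : ℕ) : ℝ), ((τ j : ℕ) : ℝ)))) := by
          refine (Finset.sum_subset (Finset.subset_univ _) ?_).symm
          intro j _ hj
          simp only [Finset.mem_insert, Finset.mem_singleton, not_or] at hj
          have h1 : (j:ℕ) ≠ (a:ℕ) := fun h => hj.1 (Fin.val_injective h)
          have h2 : (j:ℕ) ≠ (b:ℕ) := fun h => hj.2 (Fin.val_injective h)
          have h3 : ((σ j : Fin n):ℕ) ≠ ((σ a : Fin n):ℕ) :=
            fun h => (σ.injective.ne hj.1) (Fin.val_injective h)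
          have h4 : ((σ j : Fin n):ℕ) ≠ ((σ b : Fin n):ℕ) :=
            fun h => (σ.injective.ne hj.2) (Fin.val_injective h)
          have hemp : ¬((a:ℕ) < (j:ℕ) ∧ (j:ℕ) < (b:ℕ) ∧
              ((σ a : Fin n):ℕ) < ((σ j : Fin n):ℕ) ∧
              ((σ j : Fin n):ℕ) < ((σ b : Fin n):ℕ)) := by
            rintro ⟨x1, x2, x3, x4⟩
            exact hempty j x1 x2 ⟨x3, x4⟩
          simp only [hτa, hτb, hagree j hj.1 hj.2, J_cast]
          split_ifs <;> first | omega | norm_num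
        rw [hsplit, Finset.sum_pair hne]
        simp only [hτa, hτb, J_cast]
        split_ifs <;> first | omega | norm_num

lemma Bdiff (n : ℕ) (o σ τ : Equiv.Perm (Fin n)) (a b : Fin n) (hab : a < b) (hcd : σ a < σ b)
    (hτa : τ a = σ b) (hτb : τ b = σ a)
    (hagree : ∀ i, i ≠ a → i ≠ b → τ i = σ i) :
    (∑ i : Fin n, ∑ j : Fin n, J (((i : ℕ) : ℝ), ((σ i : ℕ) : ℝ))
        (((j : ℕ) : ℝ) + 1/2, ((o j : ℕ) : ℝ) + 1/2))
      - (∑ i : Fin n, ∑ j : Fin n, J (((i : ℕ) : ℝ), ((τ i : ℕ) : ℝ))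
        (((j : ℕ) : ℝ) + 1/2, ((o j : ℕ) : ℝ) + 1/2))
      = ((Nat.card {i : Fin n // a ≤ i ∧ i < b ∧ σ a ≤ o i ∧ o i < σ b} : ℕ) : ℝ) := by
  classical
  have hne : a ≠ b := ne_of_lt hab
  have habN : (a:ℕ) < (b:ℕ) := hab
  have hcdN : ((σ a : Fin n) : ℕ) < ((σ b : Fin n) : ℕ) := hcd
  rw [← Finset.sum_sub_distrib]
  calc (∑ i : Fin n,
        ((∑ j : Fin n, J (((i : ℕ) : ℝ), ((σ i : ℕ) : ℝ))
            (((j : ℕ) : ℝ) + 1/2, ((o j : ℕ) : ℝ) + 1/2))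
        - (∑ j : Fin n, J (((i : ℕ) : ℝ), ((τ i : ℕ) : ℝ))
            (((j : ℕ) : ℝ) + 1/2, ((o j : ℕ) : ℝ) + 1/2))))
      = ∑ i ∈ ({a, b} : Finset (Fin n)),
        ((∑ j : Fin n, J (((i : ℕ) : ℝ), ((σ i : ℕ) : ℝ))
            (((j : ℕ) : ℝ) + 1/2, ((o j : ℕ) : ℝ) + 1/2))
        - (∑ j : Fin n, J (((i : ℕ) : ℝ), ((τ i : ℕ) : ℝ))
            (((j : ℕ) : ℝ) + 1/2, ((o j : ℕ) : ℝ) + 1/2))) := by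
        refine (Finset.sum_subset (Finset.subset_univ _) ?_).symm
        intro i _ hi
        simp only [Finset.mem_insert, Finset.mem_singleton, not_or] at hi
        simp only [hagree i hi.1 hi.2]
        ring
    _ = ∑ j : Fin n, (if (a:ℕ) ≤ (j:ℕ) ∧ (j:ℕ) < (b:ℕ) ∧
          ((σ a : Fin n):ℕ) ≤ ((o j : Fin n):ℕ) ∧ ((o j : Fin n):ℕ) < ((σ b : Fin n):ℕ)
          then (1:ℝ) else 0) := by
        rw [Finset.sum_pair hne, ← Finset.sum_sub_distrib, ← Finset.sum_sub_distrib,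
          ← Finset.sum_add_distrib]
        refine Finset.sum_congr rfl ?_
        intro j _
        simp only [hτa, hτb, J_cast_half]
        split_ifs <;> first | omega | norm_num
    _ = ((Nat.card {i : Fin n // a ≤ i ∧ i < b ∧ σ a ≤ o i ∧ o i < σ b} : ℕ) : ℝ) := by
        rw [Nat.card_eq_fintype_card, Fintype.card_subtype, Finset.card_filter]
        push_cast
        refine Finset.sum_congr rfl ?_
        intro x _
        refine if_congr ?_ rfl rfl
        exact and_congr (Fin.le_def).symm (and_congr (Fin.lt_def).symm
          (and_congr (Fin.le_def).symm (Fin.lt_def).symm))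

/-- If `R` is an empty rectangle joining the generator `x` (permutation `σ`, occupying the
bottom-left corner `(a, σ a)` and top-right corner `(b, σ b)` of `R`) to the generator `y`
(permutation `τ`), then `M(x) - M(y) = 1 - 2·#(O-markings in R)`. -/
theorem maslov_drop_of_empty_rectangle (n : ℕ) (o σ τ : Equiv.Perm (Fin n))
    (a b : Fin n) (hab : a < b) (hcd : σ a < σ b)
    (hτa : τ a = σ b) (hτb : τ b = σ a)
    (hagree : ∀ i, i ≠ a → i ≠ b → τ i = σ i)
    (hempty : ∀ i, a < i → i < b → ¬(σ a < σ i ∧ σ i < σ b)) :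
    maslov n o σ - maslov n o τ =
      1 - 2 * ((Nat.card {i : Fin n // a ≤ i ∧ i < b ∧ σ a ≤ o i ∧ o i < σ b} : ℕ) : ℝ) := by
  have expand : maslov n o σ - maslov n o τ =
      ((∑ i : Fin n, ∑ j : Fin n,
          J (((i : ℕ) : ℝ), ((σ i : ℕ) : ℝ)) (((j : ℕ) : ℝ), ((σ j : ℕ) : ℝ)))
        - (∑ i : Fin n, ∑ j : Fin n,
          J (((i : ℕ) : ℝ), ((τ i : ℕ) : ℝ)) (((j : ℕ) : ℝ), ((τ j : ℕ) : ℝ))))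
      - 2 * ((∑ i : Fin n, ∑ j : Fin n, J (((i : ℕ) : ℝ), ((σ i : ℕ) : ℝ))
            (((j : ℕ) : ℝ) + 1/2, ((o j : ℕ) : ℝ) + 1/2))
        - (∑ i : Fin n, ∑ j : Fin n, J (((i : ℕ) : ℝ), ((τ i : ℕ) : ℝ))
            (((j : ℕ) : ℝ) + 1/2, ((o j : ℕ) : ℝ) + 1/2))) := by
    simp only [maslov]
    ring
  rw [expand, Adiff n σ τ a b hab hcd hτa hτb hagree hempty,
    Bdiff n o σ τ a b hab hcd hτa hτb hagree]
end

section
/- For the diagonal grid diagram G_n, the special generator x has coordinates at both the top-left corners and the bottom-right corners of the squares containing the O-markings, and between x and any generator y differing from x in exactly two coordinates there exist exactly two embedded rectangles whose bottom-left and top-right corners are x-coordinates, and neither rectangle contains an O-marking or an x-coordinate in its interior. -/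
/-- `i` lies in the half-open cyclic interval `[a, b)` on `ℤ/n`. -/
def cyc (n : ℕ) (a b i : Fin n) : Prop := (i - a).val < (b - a).val

/-- Ordered pairs `(a, b)` parametrize rectangles on the torus joining the generator `σ` to
a generator `τ`: the corners `(a, σ a)` (bottom-left) and `(b, σ b)` (top-right) are
`σ`-coordinates and `(a, τ a)`, `(b, τ b)` are `τ`-coordinates. -/
def joins (n : ℕ) (σ τ : Equiv.Perm (Fin n)) (a b : Fin n) : Prop :=
  a ≠ b ∧ τ a = σ b ∧ τ b = σ a ∧ ∀ i, i ≠ a → i ≠ b → τ i = σ i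

/-- The square in column `s` and row `t` lies inside the torus rectangle with bottom-left
corner `(a, σ a)` and top-right corner `(b, σ b)`. -/
def inRect (n : ℕ) (σ : Equiv.Perm (Fin n)) (a b s t : Fin n) : Prop :=
  cyc n a b s ∧ cyc n (σ a) (σ b) t

/-- The rectangle parametrized by `(a, b)` contains no coordinate of `σ` in its interior. -/
def emptyRect (n : ℕ) (σ : Equiv.Perm (Fin n)) (a b : Fin n) : Prop :=
  ∀ i, i ≠ a → i ≠ b → ¬(cyc n a b i ∧ cyc n (σ a) (σ b) (σ i) ∧ σ i ≠ σ a)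

lemma fin_sub_rel {n : ℕ} [NeZero n] (x y : Fin n) :
    (x - y).val + y.val = x.val ∨ (x - y).val + y.val = x.val + n := by
  have h : ((x - y) + y).val = x.val := by rw [sub_add_cancel]
  rw [Fin.val_add] at h
  have h1 := (x - y).is_lt
  have h2 := y.is_lt
  have hx := x.is_lt
  rcases Nat.lt_or_ge ((x - y).val + y.val) n with h' | h'
  · left; rwa [Nat.mod_eq_of_lt h'] at h
  · right
    have h'' : ((x - y).val + y.val) % n = (x - y).val + y.val - n := by
      rw [Nat.mod_eq_sub_mod h', Nat.mod_eq_of_lt (by omega)]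
    omega

lemma negmod (n : ℕ) (a v : ℕ) (ha : a < n) (hv : v = (n - a) % n) :
    v + a = 0 ∨ v + a = n := by
  rcases Nat.eq_zero_or_pos a with h | h
  · subst h; simp [Nat.mod_self] at hv; omega
  · rw [Nat.mod_eq_of_lt (by omega)] at hv; omega

/-- For the diagonal grid diagram `G_n` (the `O`-marking in column `i` lies in row
`n - 1 - i`, each `O` immediately to the top-left of the next, cyclically), the special
generator `x` with coordinates `(i, (n - i) mod n)` has its coordinates at both the
top-left corners and the bottom-right corners of the `O`-squares; and for any generator `τ`
differing from `x` in exactly two coordinates, there are exactly two embedded rectangles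
whose bottom-left and top-right corners are `x`-coordinates, and neither rectangle contains
an `O`-marking, nor an `x`-coordinate in its interior. -/
theorem diagonal_special_generator_rectangles (n : ℕ) (hn : 2 ≤ n)
    (σx : Equiv.Perm (Fin n)) (hσx : ∀ i : Fin n, (σx i : ℕ) = (n - (i : ℕ)) % n)
    (oF : Fin n → Fin n) (hoF : ∀ i : Fin n, (oF i : ℕ) = n - 1 - (i : ℕ)) :
    (∀ i : Fin n, (σx i : ℕ) = ((oF i : ℕ) + 1) % n ∧
      ∃ j : Fin n, (i : ℕ) = ((j : ℕ) + 1) % n ∧ σx i = oF j) ∧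
    (∀ (τ : Equiv.Perm (Fin n)) (a b : Fin n), joins n σx τ a b →
      Nat.card {p : Fin n × Fin n // joins n σx τ p.1 p.2} = 2 ∧
      (∀ i, ¬ inRect n σx a b i (oF i)) ∧ emptyRect n σx a b ∧
      (∀ i, ¬ inRect n σx b a i (oF i)) ∧ emptyRect n σx b a) := by
  haveI : NeZero n := ⟨by omega⟩
  have hinj := σx.injective
  constructor
  · intro i
    have hi := i.is_lt
    constructor
    · rw [hσx i, hoF i]
      congr 1
      omega
    · refine ⟨⟨(i.val + (n - 1)) % n, Nat.mod_lt _ (by omega)⟩, ?_, ?_⟩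
      · show (i : ℕ) = ((i.val + (n - 1)) % n + 1) % n
        rcases Nat.eq_zero_or_pos i.val with h0 | h0
        · rw [h0, Nat.zero_add, Nat.mod_eq_of_lt (show n - 1 < n by omega),
            show n - 1 + 1 = n by omega, Nat.mod_self]
        · have hm : (i.val + (n - 1)) % n = i.val - 1 := by
            rw [show i.val + (n - 1) = (i.val - 1) + n by omega, Nat.add_mod_right,
              Nat.mod_eq_of_lt (by omega)]
          rw [hm, show i.val - 1 + 1 = i.val by omega, Nat.mod_eq_of_lt hi]
      · apply Fin.ext
        rw [hσx i, hoF ⟨(i.val + (n - 1)) % n, Nat.mod_lt _ (by omega)⟩]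
        show (n - i.val) % n = n - 1 - ((i.val + (n - 1)) % n)
        rcases Nat.eq_zero_or_pos i.val with h0 | h0
        · rw [h0, Nat.sub_zero, Nat.mod_self, Nat.zero_add,
            Nat.mod_eq_of_lt (show n - 1 < n by omega)]
          omega
        · have hm : (i.val + (n - 1)) % n = i.val - 1 := by
            rw [show i.val + (n - 1) = (i.val - 1) + n by omega, Nat.add_mod_right,
              Nat.mod_eq_of_lt (by omega)]
          rw [hm, Nat.mod_eq_of_lt (show n - i.val < n by omega)]
          omega
  · intro τ a b hab
    obtain ⟨hne, h1, h2, h3⟩ := hab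
    have key : ∀ c d i : Fin n, ¬ inRect n σx c d i (oF i) := by
      intro c d i h
      obtain ⟨hc1, hc2⟩ := h
      unfold cyc at hc1 hc2
      have r1 := fin_sub_rel i c
      have r2 := fin_sub_rel d c
      have r3 := fin_sub_rel (oF i) (σx c)
      have r4 := fin_sub_rel (σx d) (σx c)
      have sC := negmod n c.val (σx c).val c.is_lt (hσx c)
      have sD := negmod n d.val (σx d).val d.is_lt (hσx d)
      have hO := hoF i
      have b1 := i.is_lt; have b2 := c.is_lt; have b3 := d.is_lt
      have b4 := (σx c).is_lt; have b5 := (σx d).is_lt; have b6 := (oF i).is_lt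
      omega
    have keyE : ∀ c d : Fin n, emptyRect n σx c d := by
      intro c d i hic _ h
      obtain ⟨hc1, hc2, -⟩ := h
      unfold cyc at hc1 hc2
      have r1 := fin_sub_rel i c
      have r2 := fin_sub_rel d c
      have r3 := fin_sub_rel (σx i) (σx c)
      have r4 := fin_sub_rel (σx d) (σx c)
      have sC := negmod n c.val (σx c).val c.is_lt (hσx c)
      have sD := negmod n d.val (σx d).val d.is_lt (hσx d)
      have sI := negmod n i.val (σx i).val i.is_lt (hσx i)
      have hic' : i.val ≠ c.val := fun h => hic (Fin.ext h)
      have b1 := i.is_lt; have b2 := c.is_lt; have b3 := d.is_lt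
      have b4 := (σx c).is_lt; have b5 := (σx d).is_lt; have b6 := (σx i).is_lt
      omega
    have hba : joins n σx τ b a := ⟨hne.symm, h2, h1, fun i hib hia => h3 i hia hib⟩
    have hchar : ∀ p : Fin n × Fin n, joins n σx τ p.1 p.2 ↔ p = (a, b) ∨ p = (b, a) := by
      rintro ⟨c, d⟩
      constructor
      · rintro ⟨hcd, g1, g2, g3⟩
        have ha : a = c ∨ a = d := by
          by_contra hc
          push_neg at hc
          exact hne (hinj ((g3 a hc.1 hc.2).symm.trans h1))
        have hb : b = c ∨ b = d := by
          by_contra hc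
          push_neg at hc
          exact hne (hinj (h2.symm.trans (g3 b hc.1 hc.2)))
        rcases ha with ha | ha
        · rcases hb with hb | hb
          · exact absurd (ha.trans hb.symm) hne
          · left; rw [← ha, ← hb]
        · rcases hb with hb | hb
          · right; rw [← ha, ← hb]
          · exact absurd (ha.trans hb.symm) hne
      · rintro (h | h) <;> rw [Prod.mk.injEq] at h <;> obtain ⟨rfl, rfl⟩ := h
        · exact ⟨hne, h1, h2, h3⟩
        · exact hba
    refine ⟨?_, fun i => key a b i, keyE a b, fun i => key b a i, keyE b a⟩
    have hcard : Nat.card {p : Fin n × Fin n // joins n σx τ p.1 p.2}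
        = Nat.card (({(a, b), (b, a)} : Set (Fin n × Fin n)) : Type _) := by
      apply Nat.card_congr
      exact Equiv.subtypeEquivRight fun p => by
        rw [hchar p]
        simp [Set.mem_insert_iff, Set.mem_singleton_iff]
    rw [hcard, Nat.card_coe_set_eq, Set.ncard_pair]
    exact fun h => hne (congrArg Prod.fst h)
end

section
/- For the grid presentation of the torus knot T(p,q) on an index-(p+q) diagonal grid diagram, the Alexander grading of the special generator equals (p-1)(q-1)/2. -/
open Finset

-- counting helper
lemma count_sum (s : Finset ℕ) (P : ℕ → Prop) [DecidablePred P] (t : Finset ℕ)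
    (h : s.filter P = t) (c : ℝ) :
    ∑ j ∈ s, (if P j then c else 0) = t.card * c := by
  rw [← Finset.sum_filter, h, Finset.sum_const, nsmul_eq_mul]

-- split-sum helper
lemma sum_split (p q n : ℕ) (hn : n = p + q) :
    ∑ j ∈ Finset.range n, (if j < p then (q : ℝ) else (p : ℝ)) / 2 = p * q := by
  have h : ∀ j ∈ Finset.range n,
      (if j < p then (q : ℝ) else (p : ℝ)) / 2
        = (if j < p then (q : ℝ)/2 else 0) + (if ¬ j < p then (p : ℝ)/2 else 0) := by
    intro j _; by_cases hj : j < p <;> simp [hj]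
  rw [Finset.sum_congr rfl h, Finset.sum_add_distrib,
    count_sum _ _ (Finset.range p) (by ext j; simp; omega),
    count_sum _ _ (Finset.Ico p n) (by ext j; simp [Finset.mem_Ico]; omega)]
  rw [Finset.card_range, Nat.card_Ico]
  have : n - p = q := by omega
  rw [this]; ring

lemma lemOO (n : ℕ) :
    ∑ i ∈ Finset.range n, ∑ j ∈ Finset.range n,
      J ((i : ℝ) + 1/2, ((n - 1 - i : ℕ) : ℝ) + 1/2)
        ((j : ℝ) + 1/2, ((n - 1 - j : ℕ) : ℝ) + 1/2) = 0 := by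
  apply Finset.sum_eq_zero
  intro i hi
  apply Finset.sum_eq_zero
  intro j hj
  rw [Finset.mem_range] at hi hj
  have hA : ((n - 1 - i : ℕ) : ℝ) + i + 1 = n := by
    have : (n - 1 - i) + i + 1 = n := by omega
    exact_mod_cast this
  have hB : ((n - 1 - j : ℕ) : ℝ) + j + 1 = n := by
    have : (n - 1 - j) + j + 1 = n := by omega
    exact_mod_cast this
  simp only [J]
  rw [if_neg]
  intro h
  nlinarith [sq_nonneg ((i : ℝ) - j)]

lemma lemxO (n : ℕ) (hn : 1 ≤ n) :
    ∑ i ∈ Finset.range n, ∑ j ∈ Finset.range n,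
      J ((i : ℝ), (((n - i) % n : ℕ) : ℝ))
        ((j : ℝ) + 1/2, ((n - 1 - j : ℕ) : ℝ) + 1/2) = n / 2 := by
  have hsplit : Finset.range n = insert 0 (Finset.Ico 1 n) := by
    ext k; simp [Finset.mem_Ico]; omega
  rw [hsplit, Finset.sum_insert (by simp), ← hsplit]
  have h0 : ∑ j ∈ Finset.range n,
      J (((0:ℕ) : ℝ), (((n - 0) % n : ℕ) : ℝ))
        ((j : ℝ) + 1/2, ((n - 1 - j : ℕ) : ℝ) + 1/2) = n / 2 := by
    have hc : ∀ j ∈ Finset.range n,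
        J (((0:ℕ) : ℝ), (((n - 0) % n : ℕ) : ℝ))
          ((j : ℝ) + 1/2, ((n - 1 - j : ℕ) : ℝ) + 1/2) = 1/2 := by
      intro j hj
      simp only [Nat.sub_zero, Nat.mod_self, Nat.cast_zero, J]
      rw [if_pos]
      have h1 : (0:ℝ) ≤ (j : ℝ) := Nat.cast_nonneg _
      have h2 : (0:ℝ) ≤ ((n - 1 - j : ℕ) : ℝ) := Nat.cast_nonneg _
      nlinarith
    rw [Finset.sum_congr rfl hc, Finset.sum_const, Finset.card_range, nsmul_eq_mul]
    ring
  have h1 : ∀ i ∈ Finset.Ico 1 n, (∑ j ∈ Finset.range n,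
      J ((i : ℝ), (((n - i) % n : ℕ) : ℝ))
        ((j : ℝ) + 1/2, ((n - 1 - j : ℕ) : ℝ) + 1/2)) = 0 := by
    intro i hi
    rw [Finset.mem_Ico] at hi
    apply Finset.sum_eq_zero
    intro j hj
    rw [Finset.mem_range] at hj
    have hm : (n - i) % n = n - i := Nat.mod_eq_of_lt (by omega)
    rw [hm]
    have hA : ((n - i : ℕ) : ℝ) + i = n := by
      have : (n - i) + i = n := by omega
      exact_mod_cast this
    have hB : ((n - 1 - j : ℕ) : ℝ) + j + 1 = n := by
      have : (n - 1 - j) + j + 1 = n := by omega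
      exact_mod_cast this
    simp only [J]
    rw [if_neg]
    intro h
    nlinarith [sq_nonneg ((i : ℝ) - j - 1/2)]
  rw [Finset.sum_eq_zero h1, h0]
  ring

lemma lemXX (p q n : ℕ) (hp : 1 ≤ p) (hq : 1 ≤ q) (hn : n = p + q) :
    ∑ i ∈ Finset.range n, ∑ j ∈ Finset.range n,
      J ((i : ℝ) + 1/2, (((p - 1 + n - i) % n : ℕ) : ℝ) + 1/2)
        ((j : ℝ) + 1/2, (((p - 1 + n - j) % n : ℕ) : ℝ) + 1/2) = p * q := by
  have hmod : ∀ k < n, ((p - 1 + n - k) % n : ℕ)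
      = if k < p then p - 1 - k else p - 1 + n - k := by
    intro k hk
    by_cases h : k < p
    · have he : p - 1 + n - k = (p - 1 - k) + n := by omega
      rw [if_pos h, he, Nat.add_mod_right, Nat.mod_eq_of_lt (by omega)]
    · rw [if_neg h, Nat.mod_eq_of_lt (by omega)]
  have key : ∀ i ∈ Finset.range n, ∀ j ∈ Finset.range n,
      J ((i : ℝ) + 1/2, (((p - 1 + n - i) % n : ℕ) : ℝ) + 1/2)
        ((j : ℝ) + 1/2, (((p - 1 + n - j) % n : ℕ) : ℝ) + 1/2)
      = if (i < p ∧ ¬ j < p) ∨ (¬ i < p ∧ j < p) then 1/2 else 0 := by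
    intro i hi j hj
    rw [Finset.mem_range] at hi hj
    rw [hmod i hi, hmod j hj]
    by_cases h1 : i < p <;> by_cases h2 : j < p <;>
      simp only [h1, h2, if_true, if_false, if_pos, if_neg, not_true, not_false_iff,
        and_true, and_false, true_and, false_and, or_false, false_or, J]
    · -- i < p, j < p : zero
      rw [if_neg]
      have hA : ((p - 1 - i : ℕ) : ℝ) + i + 1 = p := by
        have : (p - 1 - i) + i + 1 = p := by omega
        exact_mod_cast this
      have hB : ((p - 1 - j : ℕ) : ℝ) + j + 1 = p := by
        have : (p - 1 - j) + j + 1 = p := by omega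
        exact_mod_cast this
      intro h
      nlinarith [sq_nonneg ((i : ℝ) - j)]
    · -- i < p, ¬ j < p : 1/2
      rw [if_pos]
      have hA : ((p - 1 - i : ℕ) : ℝ) + i + 1 = p := by
        have : (p - 1 - i) + i + 1 = p := by omega
        exact_mod_cast this
      have hB : ((p - 1 + n - j : ℕ) : ℝ) + j + 1 = p + n := by
        have : (p - 1 + n - j) + j + 1 = p + n := by omega
        exact_mod_cast this
      have hip : (i : ℝ) + 1 ≤ p := by exact_mod_cast h1
      have hjp : (p : ℝ) ≤ j := by exact_mod_cast Nat.le_of_not_lt h2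
      have hjn : (j : ℝ) + 1 ≤ n := by exact_mod_cast hj
      nlinarith
    · -- ¬ i < p, j < p : 1/2
      rw [if_pos]
      have hA : ((p - 1 + n - i : ℕ) : ℝ) + i + 1 = p + n := by
        have : (p - 1 + n - i) + i + 1 = p + n := by omega
        exact_mod_cast this
      have hB : ((p - 1 - j : ℕ) : ℝ) + j + 1 = p := by
        have : (p - 1 - j) + j + 1 = p := by omega
        exact_mod_cast this
      have hjp : (j : ℝ) + 1 ≤ p := by exact_mod_cast h2
      have hip : (p : ℝ) ≤ i := by exact_mod_cast Nat.le_of_not_lt h1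
      have hin : (i : ℝ) + 1 ≤ n := by exact_mod_cast hi
      nlinarith
    · -- both ≥ p : zero
      rw [if_neg]
      have hA : ((p - 1 + n - i : ℕ) : ℝ) + i + 1 = p + n := by
        have : (p - 1 + n - i) + i + 1 = p + n := by omega
        exact_mod_cast this
      have hB : ((p - 1 + n - j : ℕ) : ℝ) + j + 1 = p + n := by
        have : (p - 1 + n - j) + j + 1 = p + n := by omega
        exact_mod_cast this
      intro h
      nlinarith [sq_nonneg ((i : ℝ) - j)]
  rw [Finset.sum_congr rfl (fun i hi => Finset.sum_congr rfl (key i hi))]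
  have hrow : ∀ i ∈ Finset.range n,
      (∑ j ∈ Finset.range n,
        if (i < p ∧ ¬ j < p) ∨ (¬ i < p ∧ j < p) then (1/2 : ℝ) else 0)
      = (if i < p then (q : ℝ) else (p : ℝ)) / 2 := by
    intro i hi
    by_cases h1 : i < p
    · simp only [h1, if_true, not_true, true_and, false_and, or_false]
      rw [count_sum _ _ (Finset.Ico p n) (by ext j; simp [Finset.mem_Ico]; omega)]
      rw [Nat.card_Ico]
      have : n - p = q := by omega
      rw [this]; ring
    · simp only [h1, if_false, not_false_iff, true_and, false_and, or_false, false_or]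
      rw [count_sum _ _ (Finset.range p) (by ext j; simp; omega)]
      rw [Finset.card_range]; ring
  rw [Finset.sum_congr rfl hrow, sum_split p q n hn]

lemma lemxX (p q n : ℕ) (hp : 1 ≤ p) (hq : 1 ≤ q) (hn : n = p + q) :
    ∑ i ∈ Finset.range n, ∑ j ∈ Finset.range n,
      J ((i : ℝ), (((n - i) % n : ℕ) : ℝ))
        ((j : ℝ) + 1/2, (((p - 1 + n - j) % n : ℕ) : ℝ) + 1/2)
      = p * q + n / 2 := by
  have hsplit : Finset.range n = insert 0 (Finset.Ico 1 n) := by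
    ext k; simp [Finset.mem_Ico]; omega
  rw [hsplit, Finset.sum_insert (by simp), ← hsplit]
  have h0 : ∑ j ∈ Finset.range n,
      J (((0:ℕ) : ℝ), (((n - 0) % n : ℕ) : ℝ))
        ((j : ℝ) + 1/2, (((p - 1 + n - j) % n : ℕ) : ℝ) + 1/2) = n / 2 := by
    have hc : ∀ j ∈ Finset.range n,
        J (((0:ℕ) : ℝ), (((n - 0) % n : ℕ) : ℝ))
          ((j : ℝ) + 1/2, (((p - 1 + n - j) % n : ℕ) : ℝ) + 1/2) = 1/2 := by
      intro j hj
      simp only [Nat.sub_zero, Nat.mod_self, Nat.cast_zero, J]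
      rw [if_pos]
      have h1 : (0:ℝ) ≤ (j : ℝ) := Nat.cast_nonneg _
      have h2 : (0:ℝ) ≤ (((p - 1 + n - j) % n : ℕ) : ℝ) := Nat.cast_nonneg _
      nlinarith
    rw [Finset.sum_congr rfl hc, Finset.sum_const, Finset.card_range, nsmul_eq_mul]
    ring
  have h1 : ∑ i ∈ Finset.Ico 1 n, ∑ j ∈ Finset.range n,
      J ((i : ℝ), (((n - i) % n : ℕ) : ℝ))
        ((j : ℝ) + 1/2, (((p - 1 + n - j) % n : ℕ) : ℝ) + 1/2) = p * q := by
    rw [Finset.sum_comm]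
    have hcol : ∀ j ∈ Finset.range n, (∑ i ∈ Finset.Ico 1 n,
        J ((i : ℝ), (((n - i) % n : ℕ) : ℝ))
          ((j : ℝ) + 1/2, (((p - 1 + n - j) % n : ℕ) : ℝ) + 1/2))
        = (if j < p then (q : ℝ) else (p : ℝ)) / 2 := by
      intro j hj
      rw [Finset.mem_range] at hj
      by_cases h2 : j < p
      · -- column with j < p : count i with j < i ≤ j + q
        have key : ∀ i ∈ Finset.Ico 1 n,
            J ((i : ℝ), (((n - i) % n : ℕ) : ℝ))
              ((j : ℝ) + 1/2, (((p - 1 + n - j) % n : ℕ) : ℝ) + 1/2)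
            = if j < i ∧ i ≤ j + q then (1/2 : ℝ) else 0 := by
          intro i hi
          rw [Finset.mem_Ico] at hi
          have hm1 : (n - i) % n = n - i := Nat.mod_eq_of_lt (by omega)
          have he : p - 1 + n - j = (p - 1 - j) + n := by omega
          rw [hm1, he, Nat.add_mod_right, Nat.mod_eq_of_lt (by omega : p - 1 - j < n)]
          have hA : ((n - i : ℕ) : ℝ) + i = n := by
            have : (n - i) + i = n := by omega
            exact_mod_cast this
          have hB : ((p - 1 - j : ℕ) : ℝ) + j + 1 = p := by
            have : (p - 1 - j) + j + 1 = p := by omega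
            exact_mod_cast this
          have hnr : (n : ℝ) = p + q := by exact_mod_cast hn
          by_cases hc : j < i ∧ i ≤ j + q
          · rw [if_pos hc]
            simp only [J]
            rw [if_pos]
            have hji : (j : ℝ) + 1 ≤ i := by exact_mod_cast hc.1
            have hiq : (i : ℝ) ≤ j + q := by exact_mod_cast hc.2
            nlinarith
          · rw [if_neg hc]
            simp only [J]
            rw [if_neg]
            intro hgt
            rcases Nat.lt_or_ge j i with hji | hji
            · have hiq : j + q + 1 ≤ i := by omega
              have hji' : (j : ℝ) + 1 ≤ i := by exact_mod_cast hji
              have hiq' : (j : ℝ) + q + 1 ≤ i := by exact_mod_cast hiq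
              nlinarith
            · have hji' : (i : ℝ) ≤ j := by exact_mod_cast hji
              nlinarith
        rw [Finset.sum_congr rfl key,
          count_sum _ _ (Finset.Ioc j (j + q))
            (by ext i; simp [Finset.mem_Ico, Finset.mem_Ioc]; omega)]
        rw [Nat.card_Ioc, if_pos h2]
        have : j + q - j = q := by omega
        rw [this]; ring
      · -- column with p ≤ j : count i with j - p < i ≤ j
        have key : ∀ i ∈ Finset.Ico 1 n,
            J ((i : ℝ), (((n - i) % n : ℕ) : ℝ))
              ((j : ℝ) + 1/2, (((p - 1 + n - j) % n : ℕ) : ℝ) + 1/2)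
            = if j - p < i ∧ i ≤ j then (1/2 : ℝ) else 0 := by
          intro i hi
          rw [Finset.mem_Ico] at hi
          have hm1 : (n - i) % n = n - i := Nat.mod_eq_of_lt (by omega)
          rw [hm1, Nat.mod_eq_of_lt (by omega : p - 1 + n - j < n)]
          have hA : ((n - i : ℕ) : ℝ) + i = n := by
            have : (n - i) + i = n := by omega
            exact_mod_cast this
          have hB : ((p - 1 + n - j : ℕ) : ℝ) + j + 1 = p + n := by
            have : (p - 1 + n - j) + j + 1 = p + n := by omega
            exact_mod_cast this
          by_cases hc : j - p < i ∧ i ≤ j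
          · rw [if_pos hc]
            simp only [J]
            rw [if_pos]
            have h3 : j + 1 ≤ i + p := by omega
            have h3' : (j : ℝ) + 1 ≤ i + p := by exact_mod_cast h3
            have h4 : (i : ℝ) ≤ j := by exact_mod_cast hc.2
            nlinarith
          · rw [if_neg hc]
            simp only [J]
            rw [if_neg]
            rw [not_lt]
            have hp' : (1 : ℝ) ≤ p := by exact_mod_cast hp
            rcases Nat.lt_or_ge j i with hji | hji
            · have hji' : (j : ℝ) + 1 ≤ i := by exact_mod_cast hji
              exact mul_nonpos_iff.mpr (Or.inl ⟨by linarith, by linarith⟩)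
            · have h3 : i + p ≤ j := by omega
              have h3' : (i : ℝ) + p ≤ j := by exact_mod_cast h3
              exact mul_nonpos_iff.mpr (Or.inr ⟨by linarith, by linarith⟩)
        rw [Finset.sum_congr rfl key,
          count_sum _ _ (Finset.Ioc (j - p) j)
            (by ext i; simp [Finset.mem_Ico, Finset.mem_Ioc]; omega)]
        rw [Nat.card_Ioc, if_neg h2]
        have : j - (j - p) = p := by omega
        rw [this]; ring
    rw [Finset.sum_congr rfl hcol, sum_split p q n hn]
  rw [h0, h1]
  ring


lemma double_conv (n : ℕ) (F : ℕ → ℕ → ℝ) :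
    ∑ i : Fin n, ∑ j : Fin n, F (i : ℕ) (j : ℕ)
      = ∑ i ∈ Finset.range n, ∑ j ∈ Finset.range n, F i j := by
  rw [← Fin.sum_univ_eq_sum_range (fun i => ∑ j ∈ Finset.range n, F i j) n]
  exact Finset.sum_congr rfl fun i _ => Fin.sum_univ_eq_sum_range (fun j => F (i : ℕ) j) n

/-- For the index-`(p+q)` grid diagram of the torus knot `T(p,q)` (with `n = p + q`):
the `O`-markings form the diagonal staircase, the `O` in column `i` lying in row
`n - 1 - i` (special `O` in the bottom-right square); the `X`-markings form the parallel
staircase, the `X` in column `j` lying in row `(p - 1 - j) mod n`; and the special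
generator has coordinates `(i, (n - i) mod n)`, the top-left corners of the `O`-squares.
The Alexander grading of the special generator equals `(p-1)(q-1)/2`. -/
theorem alexander_special_generator_torus_knot (p q : ℕ) (hp : 1 ≤ p) (hq : 1 ≤ q)
    (hpq : Nat.Coprime p q) (n : ℕ) (hn : n = p + q)
    (x X O : Fin n → ℝ × ℝ)
    (hx : ∀ i : Fin n, x i = (((i : ℕ) : ℝ), (((n - (i : ℕ)) % n : ℕ) : ℝ)))
    (hX : ∀ i : Fin n, X i =
      (((i : ℕ) : ℝ) + 1/2, (((p - 1 + n - (i : ℕ)) % n : ℕ) : ℝ) + 1/2))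
    (hO : ∀ i : Fin n, O i = (((i : ℕ) : ℝ) + 1/2, ((n - 1 - (i : ℕ) : ℕ) : ℝ) + 1/2)) :
    (∑ i, ∑ j, J (x i) (X j)) - (∑ i, ∑ j, J (x i) (O j))
      - (1/2) * (∑ i, ∑ j, J (X i) (X j)) + (1/2) * (∑ i, ∑ j, J (O i) (O j))
      - ((n : ℝ) - 1) / 2
      = ((p : ℝ) - 1) * ((q : ℝ) - 1) / 2 := by
  simp only [hx, hX, hO]
  rw [double_conv n (fun i j => J ((i : ℝ), (((n - i) % n : ℕ) : ℝ))
        ((j : ℝ) + 1/2, (((p - 1 + n - j) % n : ℕ) : ℝ) + 1/2)),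
      double_conv n (fun i j => J ((i : ℝ), (((n - i) % n : ℕ) : ℝ))
        ((j : ℝ) + 1/2, ((n - 1 - j : ℕ) : ℝ) + 1/2)),
      double_conv n (fun i j => J ((i : ℝ) + 1/2, (((p - 1 + n - i) % n : ℕ) : ℝ) + 1/2)
        ((j : ℝ) + 1/2, (((p - 1 + n - j) % n : ℕ) : ℝ) + 1/2)),
      double_conv n (fun i j => J ((i : ℝ) + 1/2, ((n - 1 - i : ℕ) : ℝ) + 1/2)
        ((j : ℝ) + 1/2, ((n - 1 - j : ℕ) : ℝ) + 1/2)),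
      lemOO n, lemxO n (by omega), lemXX p q n hp hq hn, lemxX p q n hp hq hn]
  subst hn
  push_cast
  ring
end

section
/- In the Alexander grading computation for the torus-knot grid diagram with the staircase configuration, sum_{j=1}^{p} sum_{i=2}^{p+q} J(x_i, X_j) = pq/2, i.e. the sum over i from 2 to p+q (excluding the contributions of x_1) of J(x_i, X_j), summed over the first p X-markings X_1, ..., X_p, equals pq/2. -/
/-- In the Alexander-grading computation for the torus-knot grid diagram (with
`n = p + q`): the special generator's coordinates, numbered left to right, are `x_1 = (0,0)`
and `x_i = (c, n - c)` for the column `c = i - 1 ≥ 1`; the first `p` `X`-markings, numbered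
left to right, are at `(d + 1/2, (p - 1 - d) + 1/2)` for columns `0 ≤ d ≤ p - 1`. Then
`∑_{j=1}^{p} ∑_{i=2}^{p+q} J(x_i, X_j) = pq/2`. -/
theorem torus_knot_partial_sum (p q : ℕ) (hp : 1 ≤ p) (hq : 1 ≤ q)
    (hpq : Nat.Coprime p q) (n : ℕ) (hn : n = p + q) :
    (∑ c ∈ Finset.Icc 1 (n - 1), ∑ d ∈ Finset.range p,
      J ((c : ℝ), ((n - c : ℕ) : ℝ)) ((d : ℝ) + 1/2, ((p - 1 - d : ℕ) : ℝ) + 1/2))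
      = (p : ℝ) * (q : ℝ) / 2 := by
  subst hn
  rw [Finset.sum_comm]
  have hpd : ∀ d ∈ Finset.range p,
      (∑ c ∈ Finset.Icc 1 (p + q - 1),
        J ((c : ℝ), ((p + q - c : ℕ) : ℝ)) ((d : ℝ) + 1/2, ((p - 1 - d : ℕ) : ℝ) + 1/2))
        = (q : ℝ) / 2 := by
    intro d hd
    rw [Finset.mem_range] at hd
    have hsum : ∀ c ∈ Finset.Icc 1 (p + q - 1),
        J ((c : ℝ), ((p + q - c : ℕ) : ℝ)) ((d : ℝ) + 1/2, ((p - 1 - d : ℕ) : ℝ) + 1/2)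
        = if d + 1 ≤ c ∧ c ≤ q + d then (1:ℝ)/2 else 0 := by
      intro c hc
      rw [Finset.mem_Icc] at hc
      obtain ⟨hc1, hc2⟩ := hc
      have hcle : c ≤ p + q := le_trans hc2 (Nat.sub_le _ _)
      have hdp : d ≤ p - 1 := by omega
      have h1 : ((p + q - c : ℕ) : ℝ) = (p:ℝ) + q - c := by
        push_cast [Nat.cast_sub hcle]; ring
      have h2 : ((p - 1 - d : ℕ) : ℝ) = (p:ℝ) - 1 - d := by
        have hdp' : d + 1 ≤ p := hd
        push_cast [Nat.cast_sub hdp, Nat.cast_sub hp]; ring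
      unfold J
      simp only [h1, h2]
      by_cases h : d + 1 ≤ c ∧ c ≤ q + d
      · obtain ⟨ha, hb⟩ := h
        have ha' : (d:ℝ) + 1 ≤ c := by exact_mod_cast ha
        have hb' : (c:ℝ) ≤ q + d := by exact_mod_cast hb
        rw [if_pos, if_pos ⟨ha, hb⟩]
        nlinarith
      · rw [if_neg h, if_neg]
        rw [not_lt]
        rcases (by omega : c ≤ d ∨ q + d + 1 ≤ c) with hle | hge
        · have hle' : (c:ℝ) ≤ d := by exact_mod_cast hle
          have hq' : (1:ℝ) ≤ q := by exact_mod_cast hq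
          nlinarith
        · have hge' : (q:ℝ) + d + 1 ≤ c := by exact_mod_cast hge
          have hq' : (1:ℝ) ≤ q := by exact_mod_cast hq
          nlinarith
    rw [Finset.sum_congr rfl hsum]
    have hfilter : Finset.filter (fun c => d + 1 ≤ c ∧ c ≤ q + d) (Finset.Icc 1 (p + q - 1))
        = Finset.Icc (d + 1) (q + d) := by
      ext x
      simp only [Finset.mem_filter, Finset.mem_Icc]
      omega
    rw [← Finset.sum_filter, hfilter, Finset.sum_const, Nat.card_Icc]
    have : q + d + 1 - (d + 1) = q := by omega
    rw [this]
    simp [nsmul_eq_mul]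
    ring
  rw [Finset.sum_congr rfl hpd, Finset.sum_const, Finset.card_range, nsmul_eq_mul]
  ring
end

section
/- Under the birth stabilization move on grid diagrams (adding a row and column with a new O-marking and X-marking in the same square at the bottom-right), the map F_11 on generators that adds the new corner point (n,0) shifts the Alexander grading by exactly -1/2: A(F_11(x)) = A(x) - 1/2 for every generator x of the smaller diagram. -/
/-- The Alexander grading `A(x) = J(x,X) - J(x,O) - (1/2)J(X,X) + (1/2)J(O,O) - (m-1)/2`
of a generator `x` of an index-`m` diagram with markings `X`, `O`. -/
noncomputable def alex (m : ℕ) (x X O : Fin m → ℝ × ℝ) : ℝ :=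
  (∑ i, ∑ j, J (x i) (X j)) - (∑ i, ∑ j, J (x i) (O j))
    - (1/2) * (∑ i, ∑ j, J (X i) (X j)) + (1/2) * (∑ i, ∑ j, J (O i) (O j))
    - ((m : ℝ) - 1) / 2

lemma J_zero {p q : ℝ × ℝ} (h : (p.1 - q.1) * (p.2 - q.2) ≤ 0) : J p q = 0 := by
  simp only [J, if_neg (not_lt.2 h)]

lemma J_half {p q : ℝ × ℝ} (h : (p.1 - q.1) * (p.2 - q.2) > 0) : J p q = 1/2 := by
  simp only [J, if_pos h]

lemma sum_split_s15 (n : ℕ) (F : Fin (n+1) → Fin (n+1) → ℝ) :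
    ∑ i, ∑ j, F i j
      = (∑ i : Fin n, ∑ j : Fin n, F i.castSucc j.castSucc)
        + (∑ i : Fin n, F i.castSucc (Fin.last n))
        + (∑ j : Fin n, F (Fin.last n) j.castSucc)
        + F (Fin.last n) (Fin.last n) := by
  rw [Fin.sum_univ_castSucc (f := fun i => ∑ j, F i j)]
  simp_rw [Fin.sum_univ_castSucc]
  rw [Finset.sum_add_distrib]
  ring

/-- Birth stabilization: the index-`n` link-grid diagram `L₁` (with `X`-markings `Xm`,
`O`-markings `Om`, viewed inside `[0,n) × [1,n+1)`) is stabilized to the index-`(n+1)`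
diagram `L₂` by adding a bottom row and a rightmost column carrying a new `O`-marking and
`X`-marking in the same bottom-right square `(n,0)`.  The map `F₁₁` sends a generator `x`
of `L₁` (points `(i, σ i + 1)`) to the generator of `L₂` obtained by adding the corner
point `(n, 0)`.  Then `A_{L₂}(F₁₁ x) = A_{L₁}(x) - 1/2` for every generator `x`. -/
theorem birth_alexander_shift (n : ℕ) (Xm Om σ : Equiv.Perm (Fin n)) :
    alex (n + 1)
      (fun i => if h : (i : ℕ) < n then
        (((i : ℕ) : ℝ), ((σ ⟨(i : ℕ), h⟩ : Fin n) : ℕ) + 1) else ((n : ℝ), 0))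
      (fun i => if h : (i : ℕ) < n then
        (((i : ℕ) : ℝ) + 1/2, (((Xm ⟨(i : ℕ), h⟩ : Fin n) : ℕ) : ℝ) + 1 + 1/2)
        else ((n : ℝ) + 1/2, 1/2))
      (fun i => if h : (i : ℕ) < n then
        (((i : ℕ) : ℝ) + 1/2, (((Om ⟨(i : ℕ), h⟩ : Fin n) : ℕ) : ℝ) + 1 + 1/2)
        else ((n : ℝ) + 1/2, 1/2))
    = alex n
      (fun i => (((i : ℕ) : ℝ), (((σ i : Fin n) : ℕ) : ℝ) + 1))
      (fun i => (((i : ℕ) : ℝ) + 1/2, (((Xm i : Fin n) : ℕ) : ℝ) + 1 + 1/2))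
      (fun i => (((i : ℕ) : ℝ) + 1/2, (((Om i : Fin n) : ℕ) : ℝ) + 1 + 1/2))
      - 1/2 := by
  have hlt : ∀ i : Fin n, ((i : ℕ) : ℝ) < n := fun i => by exact_mod_cast i.isLt
  have hle : ∀ i : Fin n, ((i : ℕ) : ℝ) + 1 ≤ n := fun i => by exact_mod_cast i.isLt
  have hnn : ∀ i : Fin n, (0:ℝ) ≤ ((i : ℕ) : ℝ) := fun i => Nat.cast_nonneg _
  have hcast : ∀ i : Fin n, (((i.castSucc : Fin (n+1)) : ℕ) < n) := fun i => by
    simpa using i.isLt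
  have hmk : ∀ i : Fin n, (⟨((i.castSucc : Fin (n+1)) : ℕ), hcast i⟩ : Fin n) = i :=
    fun i => Fin.ext (by simp)
  unfold alex
  rw [sum_split_s15, sum_split_s15, sum_split_s15, sum_split_s15]
  have e1 : ∀ i : Fin n,
      (if h : ((i.castSucc : Fin (n+1)) : ℕ) < n then
        ((((i.castSucc : Fin (n+1)) : ℕ) : ℝ),
          (((σ ⟨((i.castSucc : Fin (n+1)) : ℕ), h⟩ : Fin n) : ℕ) : ℝ) + 1)
        else ((n : ℝ), 0))
      = ((((i : ℕ)) : ℝ), (((σ i : Fin n) : ℕ) : ℝ) + 1) := by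
    intro i; rw [dif_pos (hcast i)]; rw [hmk i]; simp
  have e2 : ∀ (τ : Equiv.Perm (Fin n)) (i : Fin n),
      (if h : ((i.castSucc : Fin (n+1)) : ℕ) < n then
        ((((i.castSucc : Fin (n+1)) : ℕ) : ℝ) + 1/2,
          (((τ ⟨((i.castSucc : Fin (n+1)) : ℕ), h⟩ : Fin n) : ℕ) : ℝ) + 1 + 1/2)
        else ((n : ℝ) + 1/2, 1/2))
      = ((((i : ℕ)) : ℝ) + 1/2, (((τ i : Fin n) : ℕ) : ℝ) + 1 + 1/2) := by
    intro τ i; rw [dif_pos (hcast i)]; rw [hmk i]; simp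
  have l1 :
      (if h : ((Fin.last n : Fin (n+1)) : ℕ) < n then
        ((((Fin.last n : Fin (n+1)) : ℕ) : ℝ),
          (((σ ⟨((Fin.last n : Fin (n+1)) : ℕ), h⟩ : Fin n) : ℕ) : ℝ) + 1)
        else ((n : ℝ), 0)) = ((n : ℝ), 0) := by
    rw [dif_neg (by simp)]
  have l2 : ∀ (τ : Equiv.Perm (Fin n)),
      (if h : ((Fin.last n : Fin (n+1)) : ℕ) < n then
        ((((Fin.last n : Fin (n+1)) : ℕ) : ℝ) + 1/2,
          (((τ ⟨((Fin.last n : Fin (n+1)) : ℕ), h⟩ : Fin n) : ℕ) : ℝ) + 1 + 1/2)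
        else ((n : ℝ) + 1/2, 1/2)) = ((n : ℝ) + 1/2, 1/2) := by
    intro τ; rw [dif_neg (by simp)]
  simp only [e1, e2, l1, l2]
  have hxX : ∀ (τ : Equiv.Perm (Fin n)) (i : Fin n),
      J (((i : ℕ) : ℝ), (((τ i : Fin n) : ℕ) : ℝ) + 1) ((n : ℝ) + 1/2, 1/2) = 0 := by
    intro τ i
    apply J_zero
    have h1 := hlt i; have h2 := hnn (τ i)
    dsimp only; nlinarith
  have hXx : ∀ (τ : Equiv.Perm (Fin n)) (j : Fin n),
      J ((n : ℝ), 0) (((j : ℕ) : ℝ) + 1/2, (((τ j : Fin n) : ℕ) : ℝ) + 1 + 1/2) = 0 := by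
    intro τ j
    apply J_zero
    have h1 := hle j; have h2 := hnn (τ j)
    dsimp only; nlinarith
  have hMnew : ∀ (τ : Equiv.Perm (Fin n)) (i : Fin n),
      J (((i : ℕ) : ℝ) + 1/2, (((τ i : Fin n) : ℕ) : ℝ) + 1 + 1/2) ((n : ℝ) + 1/2, 1/2) = 0 := by
    intro τ i
    apply J_zero
    have h1 := hlt i; have h2 := hnn (τ i)
    dsimp only; nlinarith
  have hnewM : ∀ (τ : Equiv.Perm (Fin n)) (j : Fin n),
      J ((n : ℝ) + 1/2, 1/2) (((j : ℕ) : ℝ) + 1/2, (((τ j : Fin n) : ℕ) : ℝ) + 1 + 1/2) = 0 := by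
    intro τ j
    apply J_zero
    have h1 := hlt j; have h2 := hnn (τ j)
    dsimp only; nlinarith
  have hcorner : J ((n : ℝ), 0) ((n : ℝ) + 1/2, 1/2) = 1/2 := by
    apply J_half; dsimp only; nlinarith
  have hnewnew : J ((n : ℝ) + 1/2, (1:ℝ)/2) ((n : ℝ) + 1/2, 1/2) = 0 := by
    apply J_zero; dsimp only; nlinarith
  simp only [hxX, hXx, hMnew, hnewM, hcorner, hnewnew, Finset.sum_const_zero]
  push_cast
  ring
end
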